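/- arXiv:1602.06734 — 2 statements merged into one kernel-verified Lean document; each statement's English description precedes it below -/
import Mathlib

section
/- Main theorem (single-fiber model): Let F : ℝ^n × (ℝ^n \ {0}) → ℝ, n ≥ 2, be smooth, positive, positively 1-homogeneous in y, and such that for no x is F(x,·) linear in y. Let P be smooth, positively 1-homogeneous in y, satisfying: (i) F ∇_yP = P ∇_yF (the curvature obstruction d_J(P/F) = 0), and (ii) ∇_x P(x,y) = P(x,y) ∇_y P(x,y) for all (x,y) (the Funk equation d_hP = P d_JP with d_hF = 0, specialized to a flat horizontal distribution in these coordinates). Then P ≡ 0. -/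
open RealInnerProductSpace

noncomputable section FunkAux

variable {n : ℕ}

private lemma funk_fderiv_apply (f : EuclideanSpace ℝ (Fin n) → ℝ)
    (x v : EuclideanSpace ℝ (Fin n)) :
    fderiv ℝ f x v = ⟪gradient f x, v⟫ := by
  have h : fderiv ℝ f x = InnerProductSpace.toDual ℝ _ (gradient f x) := by simp [gradient]
  rw [h]
  simp [InnerProductSpace.toDual_apply_apply]

private lemma funk_toDual_gradient (f : EuclideanSpace ℝ (Fin n) → ℝ)
    (x : EuclideanSpace ℝ (Fin n)) :
    InnerProductSpace.toDual ℝ _ (gradient f x) = fderiv ℝ f x := by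
  simp [gradient]

private lemma funk_fderiv_zero_of_gradient_zero {f : EuclideanSpace ℝ (Fin n) → ℝ}
    {x : EuclideanSpace ℝ (Fin n)} (h : gradient f x = 0) : fderiv ℝ f x = 0 := by
  rw [gradient] at h
  rwa [LinearIsometryEquiv.map_eq_zero_iff] at h

private lemma funk_eq_on_halfspace {f : EuclideanSpace ℝ (Fin n) → ℝ}
    {u a b : EuclideanSpace ℝ (Fin n)}
    (hdiff : ∀ y : EuclideanSpace ℝ (Fin n), y ≠ 0 → DifferentiableAt ℝ f y)
    (hder : ∀ y : EuclideanSpace ℝ (Fin n), y ≠ 0 → fderiv ℝ f y = 0)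
    (ha : 0 < ⟪u, a⟫) (hb : 0 < ⟪u, b⟫) : f a = f b := by
  set s : Set (EuclideanSpace ℝ (Fin n)) := {w | 0 < ⟪u, w⟫} with hs
  have hlin : IsLinearMap ℝ (fun w : EuclideanSpace ℝ (Fin n) => ⟪u, w⟫) :=
    ⟨fun x y => inner_add_right _ _ _, fun c x => real_inner_smul_right _ _ _⟩
  have hconv : Convex ℝ s := convex_halfSpace_gt hlin 0
  have hopen : IsOpen s :=
    isOpen_lt continuous_const (continuous_const.inner continuous_id)
  have hne : ∀ w ∈ s, w ≠ 0 := by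
    rintro w hw rfl
    simp only [hs, Set.mem_setOf_eq, inner_zero_right] at hw
    exact lt_irrefl 0 hw
  exact hconv.is_const_of_fderivWithin_eq_zero
    (fun w hw => (hdiff w (hne w hw)).differentiableWithinAt)
    (fun w hw => by rw [fderivWithin_of_isOpen hopen hw]; exact hder w (hne w hw))
    ha hb

private lemma funk_eq_on_punctured (hn : 2 ≤ n) {f : EuclideanSpace ℝ (Fin n) → ℝ}
    (hdiff : ∀ y : EuclideanSpace ℝ (Fin n), y ≠ 0 → DifferentiableAt ℝ f y)
    (hder : ∀ y : EuclideanSpace ℝ (Fin n), y ≠ 0 → fderiv ℝ f y = 0)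
    {a b : EuclideanSpace ℝ (Fin n)} (ha : a ≠ 0) (hb : b ≠ 0) : f a = f b := by
  have step : ∀ v w : EuclideanSpace ℝ (Fin n), v ≠ 0 → w ≠ 0 → 0 ≤ ⟪v, w⟫ → f v = f w := by
    intro v w hv hw hvw
    have h1 : 0 < ⟪v + w, v⟫ := by
      rw [inner_add_left]
      have h2 : 0 < ⟪v, v⟫ := lt_of_le_of_ne real_inner_self_nonneg
        (Ne.symm (inner_self_ne_zero.mpr hv))
      have h3 : ⟪w, v⟫ = ⟪v, w⟫ := real_inner_comm _ _
      linarith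
    have h4 : 0 < ⟪v + w, w⟫ := by
      rw [inner_add_left]
      have h2 : 0 < ⟪w, w⟫ := lt_of_le_of_ne real_inner_self_nonneg
        (Ne.symm (inner_self_ne_zero.mpr hw))
      linarith
    exact funk_eq_on_halfspace hdiff hder h1 h4
  rcases le_or_gt 0 ⟪a, b⟫ with h | h
  · exact step a b ha hb h
  · obtain ⟨c, hc⟩ : ∃ c : EuclideanSpace ℝ (Fin n), c ∉ (ℝ ∙ a) := by
      by_contra hcon
      push_neg at hcon
      have htop : (ℝ ∙ a) = ⊤ := Submodule.eq_top_iff'.mpr hcon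
      have h1 : Module.finrank ℝ (ℝ ∙ a) = 1 := finrank_span_singleton ha
      have h2 : Module.finrank ℝ (EuclideanSpace ℝ (Fin n)) = n := finrank_euclideanSpace_fin
      rw [htop, finrank_top] at h1
      omega
    set w : EuclideanSpace ℝ (Fin n) := ⟪a, a⟫ • c - ⟪a, c⟫ • a with hwdef
    have hworth : ⟪a, w⟫ = 0 := by
      simp only [hwdef, inner_sub_right, real_inner_smul_right]
      ring
    have hw0 : w ≠ 0 := by
      intro h0
      apply hc
      have haa : ⟪a, a⟫ ≠ 0 := inner_self_ne_zero.mpr ha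
      have h1 : ⟪a, a⟫ • c = ⟪a, c⟫ • a := by
        rwa [sub_eq_zero] at h0
      rw [Submodule.mem_span_singleton]
      refine ⟨⟪a, a⟫⁻¹ * ⟪a, c⟫, ?_⟩
      rw [mul_smul, ← h1, smul_smul, inv_mul_cancel₀ haa, one_smul]
    set w' : EuclideanSpace ℝ (Fin n) := if 0 ≤ ⟪w, b⟫ then w else -w with hw'def
    have hw'0 : w' ≠ 0 := by
      rw [hw'def]; split <;> simpa using hw0
    have hw'orth : ⟪a, w'⟫ = 0 := by
      rw [hw'def]; split
      · exact hworth
      · rw [inner_neg_right, hworth, neg_zero]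
    have hw'b : 0 ≤ ⟪w', b⟫ := by
      rw [hw'def]; split
      · assumption
      · rw [inner_neg_left]; linarith [lt_of_not_ge (by assumption : ¬ 0 ≤ ⟪w, b⟫)]
    have e1 : f a = f w' := step a w' ha hw'0 (le_of_eq hw'orth.symm)
    have e2 : f w' = f b := step w' b hw'0 hb hw'b
    rw [e1, e2]

/-- Euler's identity for positively 1-homogeneous functions. -/
private lemma funk_euler {f : EuclideanSpace ℝ (Fin n) → ℝ} {y : EuclideanSpace ℝ (Fin n)}
    (hdiff : DifferentiableAt ℝ f y)
    (hhom : ∀ l : ℝ, 0 < l → f (l • y) = l * f y) :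
    f y = ⟪gradient f y, y⟫ := by
  have h1 : HasDerivAt (fun t : ℝ => f (t • y)) (fderiv ℝ f y y) 1 := by
    have hc : HasDerivAt (fun t : ℝ => t • y) y 1 := by
      simpa using (hasDerivAt_id (1 : ℝ)).smul_const y
    have hf : HasFDerivAt f (fderiv ℝ f y) ((1 : ℝ) • y) := by
      rw [one_smul]; exact hdiff.hasFDerivAt
    exact hf.comp_hasDerivAt (x := 1) hc
  have h2 : HasDerivAt (fun t : ℝ => t * f y) (f y) 1 := by
    simpa using (hasDerivAt_id (1 : ℝ)).mul_const (f y)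
  have h3 : HasDerivAt (fun t : ℝ => f (t • y)) (f y) 1 := by
    apply h2.congr_of_eventuallyEq
    filter_upwards [eventually_gt_nhds zero_lt_one] with t ht
    exact hhom t ht
  rw [← funk_fderiv_apply, h1.unique h3]

private lemma funk_fderiv_inv_comp {u : EuclideanSpace ℝ (Fin n) → ℝ}
    {y : EuclideanSpace ℝ (Fin n)} (hu : DifferentiableAt ℝ u y) (h0 : u y ≠ 0) :
    fderiv ℝ (fun z => (u z)⁻¹) y = (-(u y ^ 2)⁻¹) • fderiv ℝ u y := by
  have hcomp : (fun z => (u z)⁻¹) = (fun t : ℝ => t⁻¹) ∘ u := rfl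
  rw [hcomp, fderiv_comp y (differentiableAt_inv h0) hu, fderiv_inv]
  ext v
  simp [mul_comm]

end FunkAux

/-- main theorem, single-fiber coordinate model: Let `F` on
`ℝ^n × (ℝ^n \ {0})`, `n ≥ 2`, be smooth, positive, positively 1-homogeneous in `y`,
nowhere linear in `y`, and flat in these coordinates (`∇_x F = 0`). If `P` is smooth,
positively 1-homogeneous in `y`, and satisfies
(i) `F ∇_y P = P ∇_y F` (the curvature obstruction `d_J(P/F) = 0`) and
(ii) `∇_x P = P ∇_y P` (the Funk equation, flat horizontal distribution),
then `P ≡ 0`. -/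
theorem no_nontrivial_funk_function (n : ℕ) (hn : 2 ≤ n)
    (F P : EuclideanSpace ℝ (Fin n) → EuclideanSpace ℝ (Fin n) → ℝ)
    (hFsm : ContDiffOn ℝ (⊤ : ℕ∞)
      (fun p : EuclideanSpace ℝ (Fin n) × EuclideanSpace ℝ (Fin n) => F p.1 p.2)
      {p | p.2 ≠ 0})
    (hPsm : ContDiffOn ℝ (⊤ : ℕ∞)
      (fun p : EuclideanSpace ℝ (Fin n) × EuclideanSpace ℝ (Fin n) => P p.1 p.2)
      {p | p.2 ≠ 0})
    (hFpos : ∀ x y, y ≠ 0 → 0 < F x y)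
    (hFhom : ∀ x y, y ≠ 0 → ∀ l : ℝ, 0 < l → F x (l • y) = l * F x y)
    (hPhom : ∀ x y, y ≠ 0 → ∀ l : ℝ, 0 < l → P x (l • y) = l * P x y)
    (hFnonlin : ∀ x, ¬ ∃ g : EuclideanSpace ℝ (Fin n), ∀ y, y ≠ 0 → F x y = ⟪g, y⟫)
    (hFflat : ∀ x y, y ≠ 0 → gradient (fun x' => F x' y) x = 0)
    (hi : ∀ x y, y ≠ 0 → F x y • gradient (P x) y = P x y • gradient (F x) y)
    (hii : ∀ x y, y ≠ 0 → gradient (fun x' => P x' y) x = P x y • gradient (P x) y) :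
    ∀ x y, y ≠ 0 → P x y = 0 := by
  have hEopen : IsOpen {v : EuclideanSpace ℝ (Fin n) | v ≠ 0} := isOpen_ne
  have hopen : IsOpen {p : EuclideanSpace ℝ (Fin n) × EuclideanSpace ℝ (Fin n) | p.2 ≠ 0} :=
    hEopen.preimage continuous_snd
  -- differentiability of slices
  have dsliceY : ∀ Φ : EuclideanSpace ℝ (Fin n) → EuclideanSpace ℝ (Fin n) → ℝ,
      ContDiffOn ℝ (⊤ : ℕ∞)
        (fun p : EuclideanSpace ℝ (Fin n) × EuclideanSpace ℝ (Fin n) => Φ p.1 p.2)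
        {p | p.2 ≠ 0} →
      ∀ x y : EuclideanSpace ℝ (Fin n), y ≠ 0 → DifferentiableAt ℝ (Φ x) y := by
    intro Φ hsm x y hy
    have h1 : ContDiffAt ℝ (⊤ : ℕ∞)
        (fun p : EuclideanSpace ℝ (Fin n) × EuclideanSpace ℝ (Fin n) => Φ p.1 p.2) (x, y) :=
      hsm.contDiffAt (hopen.mem_nhds hy)
    have h2 : ContDiffAt ℝ (⊤ : ℕ∞)
        (fun y' : EuclideanSpace ℝ (Fin n) =>
          ((x, y') : EuclideanSpace ℝ (Fin n) × EuclideanSpace ℝ (Fin n))) y :=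
      ContDiffAt.prodMk contDiffAt_const contDiffAt_id
    exact (h1.comp y h2).differentiableAt (by simp)
  have dsliceX : ∀ Φ : EuclideanSpace ℝ (Fin n) → EuclideanSpace ℝ (Fin n) → ℝ,
      ContDiffOn ℝ (⊤ : ℕ∞)
        (fun p : EuclideanSpace ℝ (Fin n) × EuclideanSpace ℝ (Fin n) => Φ p.1 p.2)
        {p | p.2 ≠ 0} →
      ∀ x y : EuclideanSpace ℝ (Fin n), y ≠ 0 →
        DifferentiableAt ℝ (fun x' => Φ x' y) x := by
    intro Φ hsm x y hy
    have h1 : ContDiffAt ℝ (⊤ : ℕ∞)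
        (fun p : EuclideanSpace ℝ (Fin n) × EuclideanSpace ℝ (Fin n) => Φ p.1 p.2) (x, y) :=
      hsm.contDiffAt (hopen.mem_nhds hy)
    have h2 : ContDiffAt ℝ (⊤ : ℕ∞)
        (fun x' : EuclideanSpace ℝ (Fin n) =>
          ((x', y) : EuclideanSpace ℝ (Fin n) × EuclideanSpace ℝ (Fin n))) x :=
      ContDiffAt.prodMk contDiffAt_id contDiffAt_const
    exact (h1.comp x h2).differentiableAt (by simp)
  -- relation between fderivs from (i)
  have keyPF : ∀ x y : EuclideanSpace ℝ (Fin n), y ≠ 0 →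
      fderiv ℝ (P x) y = (P x y / F x y) • fderiv ℝ (F x) y := by
    intro x y hy
    have hF0 : F x y ≠ 0 := (hFpos x y hy).ne'
    have h := congrArg (InnerProductSpace.toDual ℝ (EuclideanSpace ℝ (Fin n))) (hi x y hy)
    rw [map_smul, map_smul, funk_toDual_gradient, funk_toDual_gradient] at h
    calc fderiv ℝ (P x) y = (F x y)⁻¹ • (F x y • fderiv ℝ (P x) y) := by
          rw [smul_smul, inv_mul_cancel₀ hF0, one_smul]
      _ = (F x y)⁻¹ • (P x y • fderiv ℝ (F x) y) := by rw [h]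
      _ = (P x y / F x y) • fderiv ℝ (F x) y := by rw [smul_smul, div_eq_inv_mul]
  -- P/F constant in y
  have ratio : ∀ x y₁ y₂ : EuclideanSpace ℝ (Fin n), y₁ ≠ 0 → y₂ ≠ 0 →
      P x y₁ * F x y₂ = P x y₂ * F x y₁ := by
    intro x y₁ y₂ h1 h2
    have hdiffq : ∀ y : EuclideanSpace ℝ (Fin n), y ≠ 0 →
        DifferentiableAt ℝ (fun w => P x w / F x w) y := by
      intro y hy
      have heq : (fun w => P x w / F x w) = fun w => P x w * (F x w)⁻¹ := by
        funext w; rw [div_eq_mul_inv]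
      rw [heq]
      exact (dsliceY P hPsm x y hy).mul
        ((dsliceY F hFsm x y hy).inv (hFpos x y hy).ne')
    have hderq : ∀ y : EuclideanSpace ℝ (Fin n), y ≠ 0 →
        fderiv ℝ (fun w => P x w / F x w) y = 0 := by
      intro y hy
      have hF0 : F x y ≠ 0 := (hFpos x y hy).ne'
      have hdF := dsliceY F hFsm x y hy
      have hdP := dsliceY P hPsm x y hy
      have heq : (fun w => P x w / F x w) = fun w => P x w * (F x w)⁻¹ := by
        funext w; rw [div_eq_mul_inv]
      rw [heq, fderiv_fun_mul hdP (show DifferentiableAt ℝ (fun w => (F x w)⁻¹) y from hdF.inv hF0), funk_fderiv_inv_comp hdF hF0, keyPF x y hy,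
        smul_smul, smul_smul, ← add_smul]
      have hz : P x y * -(F x y ^ 2)⁻¹ + (F x y)⁻¹ * (P x y / F x y) = 0 := by
        field_simp
        ring
      rw [hz, zero_smul]
    have hq := funk_eq_on_punctured hn hdiffq hderq h1 h2
    have hF1 : F x y₁ ≠ 0 := (hFpos x y₁ h1).ne'
    have hF2 : F x y₂ ≠ 0 := (hFpos x y₂ h2).ne'
    exact (div_eq_div_iff hF1 hF2).mp hq
  -- F is constant in x
  have FconstX : ∀ x₁ x₂ y : EuclideanSpace ℝ (Fin n), y ≠ 0 → F x₁ y = F x₂ y := by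
    intro x₁ x₂ y hy
    exact is_const_of_fderiv_eq_zero
      (fun x' => dsliceX F hFsm x' y hy)
      (fun x' => funk_fderiv_zero_of_gradient_zero (hFflat x' y hy)) x₁ x₂
  -- gradient of a constant multiple
  have gradmul : ∀ (c : ℝ) (f : EuclideanSpace ℝ (Fin n) → ℝ) (x : EuclideanSpace ℝ (Fin n)),
      DifferentiableAt ℝ f x → gradient (fun z => c * f z) x = c • gradient f x := by
    intro c f x hf
    unfold gradient
    rw [fderiv_const_mul hf c, map_smul]
  -- main argument
  intro x y hy
  have hn0 : 0 < n := by omega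
  obtain ⟨y₀, hy₀⟩ : ∃ y₀ : EuclideanSpace ℝ (Fin n), y₀ ≠ 0 := by
    refine ⟨EuclideanSpace.single ⟨0, hn0⟩ 1, fun h => ?_⟩
    have h2 := congrArg (fun v => v ⟨0, hn0⟩) h
    simp [EuclideanSpace.single_apply] at h2
  have hF0' : F x y₀ ≠ 0 := (hFpos x y₀ hy₀).ne'
  set A : ℝ := P x y₀ / F x y₀ with hAdef
  have hPA : ∀ z : EuclideanSpace ℝ (Fin n), z ≠ 0 → P x z = A * F x z := by
    intro z hz
    have h1 := ratio x z y₀ hz hy₀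
    rw [hAdef]
    field_simp
    linarith [h1]
  have gradPy : ∀ z : EuclideanSpace ℝ (Fin n), z ≠ 0 →
      gradient (P x) z = A • gradient (F x) z := by
    intro z hz
    have hF0 : F x z ≠ 0 := (hFpos x z hz).ne'
    have h := hi x z hz
    rw [hPA z hz] at h
    have h2 : F x z • gradient (P x) z = F x z • (A • gradient (F x) z) := by
      rw [h, smul_smul, mul_comm A (F x z)]
    exact smul_right_injective (EuclideanSpace ℝ (Fin n)) hF0 h2
  by_cases hA0 : A = 0
  · rw [hPA y hy, hA0, zero_mul]
  · exfalso
    apply hFnonlin x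
    refine ⟨gradient (F x) y₀, fun z hz => ?_⟩
    have hFz0 : F x z ≠ 0 := (hFpos x z hz).ne'
    have hgeq : gradient (F x) z = gradient (F x) y₀ := by
      set c : ℝ := F x z / F x y₀ with hcdef
      have hfun : (fun x' => P x' z) = fun x' => c * P x' y₀ := by
        funext x'
        have h1 := ratio x' z y₀ hz hy₀
        rw [FconstX x' x z hz, FconstX x' x y₀ hy₀] at h1
        rw [hcdef]
        field_simp
        linarith [h1]
      have g1 := hii x z hz
      have g2 := hii x y₀ hy₀
      rw [hfun, gradmul c _ x (dsliceX P hPsm x y₀ hy₀), g2] at g1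
      rw [gradPy z hz, gradPy y₀ hy₀, hPA z hz, hPA y₀ hy₀] at g1
      have g1' : (c * ((A * F x y₀) * A)) • gradient (F x) y₀
          = ((A * F x z) * A) • gradient (F x) z := by
        calc (c * ((A * F x y₀) * A)) • gradient (F x) y₀
            = c • ((A * F x y₀) • (A • gradient (F x) y₀)) := by
              rw [smul_smul, smul_smul]
              congr 1
              ring
          _ = (A * F x z) • (A • gradient (F x) z) := g1
          _ = ((A * F x z) * A) • gradient (F x) z := by rw [smul_smul]
      have hc1 : c * ((A * F x y₀) * A) = (A * F x z) * A := by
        rw [hcdef]; field_simp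
      rw [hc1] at g1'
      have hk : A * F x z * A ≠ 0 := by
        apply mul_ne_zero (mul_ne_zero hA0 hFz0) hA0
      exact (smul_right_injective (EuclideanSpace ℝ (Fin n)) hk g1').symm
    rw [funk_euler (dsliceY F hFsm x z hz) (fun l hl => hFhom x z hz l hl), hgeq]
end

section
/- Corollary (coordinate model): Let S be a spray on ℝ^n × (ℝ^n \ {0}) whose Jacobi endomorphism is isotropic, Φ = ρJ − α ⊗ 𝔠, with Ricci scalar ρ nowhere zero. If P is a Funk function for S (d_hP = P d_JP, P 1-homogeneous) and the deformed spray S̃ = S − 2P𝔠 is metrizable by a Finsler function F (so that Φ̃ = Φ takes the scalar-flag-curvature form κ(F²J − F d_JF ⊗ 𝔠) with κF² = ρ ≠ 0), then −P is a Funk function for the Finsler space (M,F); combined with the main theorem, P ≡ 0. -/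
open RealInnerProductSpace


section Aux

variable {E F G : Type*} [NormedAddCommGroup E] [NormedSpace ℝ E]
  [NormedAddCommGroup F] [NormedSpace ℝ F] [NormedAddCommGroup G] [NormedSpace ℝ G]

lemma fderiv_fst_slice {f : E × F → G} {x : E} {y : F} (hf : DifferentiableAt ℝ f (x, y))
    (v : E) : fderiv ℝ (fun x' => f (x', y)) x v = fderiv ℝ f (x, y) (v, 0) := by
  have h1 : HasFDerivAt (fun x' : E => (x', y))
      ((ContinuousLinearMap.id ℝ E).prod 0) x :=
    (hasFDerivAt_id x).prodMk (hasFDerivAt_const y x)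
  have h2 := (hf.hasFDerivAt.comp x h1).fderiv
  rw [show (fun x' => f (x', y)) = (f ∘ fun x' : E => (x', y)) from rfl, h2]
  simp

lemma fderiv_snd_slice {f : E × F → G} {x : E} {y : F} (hf : DifferentiableAt ℝ f (x, y))
    (w : F) : fderiv ℝ (fun y' => f (x, y')) y w = fderiv ℝ f (x, y) (0, w) := by
  have h1 : HasFDerivAt (fun y' : F => (x, y'))
      ((0 : F →L[ℝ] E).prod (ContinuousLinearMap.id ℝ F)) y :=
    (hasFDerivAt_const x y).prodMk (hasFDerivAt_id y)
  have h2 := (hf.hasFDerivAt.comp y h1).fderiv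
  rw [show (fun y' => f (x, y')) = (f ∘ fun y' : F => (x, y')) from rfl, h2]
  simp

lemma euler_scalar {f : E → ℝ} {y : E} (hf : DifferentiableAt ℝ f y)
    (h : ∀ l : ℝ, 0 < l → f (l • y) = l * f y) : fderiv ℝ f y y = f y := by
  have hs : HasDerivAt (fun l : ℝ => l • y) y 1 := by
    simpa using (hasDerivAt_id (1 : ℝ)).smul_const y
  have h1 : HasDerivAt (fun l : ℝ => f (l • y)) (fderiv ℝ f y y) 1 := by
    have hfy : HasFDerivAt f (fderiv ℝ f y) ((1:ℝ) • y) := by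
      rw [one_smul]; exact hf.hasFDerivAt
    exact hfy.comp_hasDerivAt 1 hs
  have h2 : HasDerivAt (fun l : ℝ => l * f y) (f y) 1 := by
    simpa using (hasDerivAt_id (1 : ℝ)).mul_const (f y)
  have heq : (fun l : ℝ => f (l • y)) =ᶠ[nhds (1 : ℝ)] fun l => l * f y := by
    filter_upwards [eventually_gt_nhds zero_lt_one] with l hl using h l hl
  exact (h1.congr_of_eventuallyEq heq.symm).unique h2

lemma euler_vec2 {f : E → G} {y : E} (hf : DifferentiableAt ℝ f y)
    (h : ∀ l : ℝ, 0 < l → f (l • y) = l ^ 2 • f y) :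
    fderiv ℝ f y y = (2 : ℝ) • f y := by
  have hs : HasDerivAt (fun l : ℝ => l • y) y 1 := by
    simpa using (hasDerivAt_id (1 : ℝ)).smul_const y
  have h1 : HasDerivAt (fun l : ℝ => f (l • y)) (fderiv ℝ f y y) 1 := by
    have hfy : HasFDerivAt f (fderiv ℝ f y) ((1:ℝ) • y) := by
      rw [one_smul]; exact hf.hasFDerivAt
    exact hfy.comp_hasDerivAt 1 hs
  have h2 : HasDerivAt (fun l : ℝ => l ^ 2 • f y) ((2 : ℝ) • f y) 1 := by
    have := (hasDerivAt_pow 2 (1 : ℝ)).smul_const (f y)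
    simpa using this
  have heq : (fun l : ℝ => f (l • y)) =ᶠ[nhds (1 : ℝ)] fun l => l ^ 2 • f y := by
    filter_upwards [eventually_gt_nhds zero_lt_one] with l hl using h l hl
  exact (h1.congr_of_eventuallyEq heq.symm).unique h2


end Aux

section Key

variable {E : Type*} [NormedAddCommGroup E] [NormedSpace ℝ E]

set_option maxHeartbeats 2000000 in
/-- Core second-order computation: `B ∘ Φ = 0`, hence `F·d_JP = P·d_JF`. -/
lemma key_T1 (G : E → E → E) (P F κ : E → E → ℝ)
    (hGsm : ContDiffOn ℝ (⊤ : ℕ∞) (fun p : E × E => G p.1 p.2) {p : E × E | p.2 ≠ 0})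
    (hPsm : ContDiffOn ℝ (⊤ : ℕ∞) (fun p : E × E => P p.1 p.2) {p : E × E | p.2 ≠ 0})
    (hG2 : ∀ x y, y ≠ 0 → ∀ l : ℝ, 0 < l → G x (l • y) = (l ^ 2) • G x y)
    (hPhom : ∀ x y, y ≠ 0 → ∀ l : ℝ, 0 < l → P x (l • y) = l * P x y)
    (hFpos : ∀ x y, y ≠ 0 → 0 < F x y)
    (hκ : ∀ x y, y ≠ 0 → κ x y ≠ 0)
    (hFunk : ∀ x y, y ≠ 0 → ∀ v,
      fderiv ℝ (fun x' => P x' y) x v - fderiv ℝ (P x) y (fderiv ℝ (G x) y v) =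
        P x y * fderiv ℝ (P x) y v)
    (hPhiFlag : ∀ x y, y ≠ 0 → ∀ v,
      (2 : ℝ) • fderiv ℝ (fun x' => G x' y) x v
        - fderiv ℝ (fun x' => fderiv ℝ (G x') y v) x y
        + fderiv ℝ (fun y' => fderiv ℝ (G x) y' v) y ((2 : ℝ) • G x y)
        - fderiv ℝ (G x) y (fderiv ℝ (G x) y v)
      = (κ x y * (F x y) ^ 2) • v - (κ x y * F x y * fderiv ℝ (F x) y v) • y) :
    ∀ x y, y ≠ 0 → ∀ v,
      F x y * fderiv ℝ (P x) y v = P x y * fderiv ℝ (F x) y v := by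
  set U : Set (E × E) := {p : E × E | p.2 ≠ 0} with hUdef
  have hU : IsOpen U := isOpen_compl_singleton.preimage continuous_snd
  set Pf : E × E → ℝ := fun p => P p.1 p.2 with hPfdef
  set Gf : E × E → E := fun p => G p.1 p.2 with hGfdef
  set P1 : E × E → (E × E) →L[ℝ] ℝ := fderiv ℝ Pf with hP1def
  set G1 : E × E → (E × E) →L[ℝ] E := fderiv ℝ Gf with hG1def
  set P2 : E × E → (E × E) →L[ℝ] (E × E) →L[ℝ] ℝ := fderiv ℝ P1 with hP2def
  set G2 : E × E → (E × E) →L[ℝ] (E × E) →L[ℝ] E := fderiv ℝ G1 with hG2def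
  -- membership
  have hmem : ∀ (x y : E), y ≠ 0 → ((x, y) : E × E) ∈ U := fun x y hy => hy
  -- pointwise smoothness
  have hPc : ∀ q ∈ U, ContDiffAt ℝ (⊤ : ℕ∞) Pf q := fun q hq => hPsm.contDiffAt (hU.mem_nhds hq)
  have hGc : ∀ q ∈ U, ContDiffAt ℝ (⊤ : ℕ∞) Gf q := fun q hq => hGsm.contDiffAt (hU.mem_nhds hq)
  have hPd : ∀ q ∈ U, DifferentiableAt ℝ Pf q := fun q hq => (hPc q hq).differentiableAt (by simp)
  have hGd : ∀ q ∈ U, DifferentiableAt ℝ Gf q := fun q hq => (hGc q hq).differentiableAt (by simp)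
  have hP1c : ∀ q ∈ U, ContDiffAt ℝ (⊤ : ℕ∞) P1 q := fun q hq => (hPc q hq).fderiv_right (by simp)
  have hG1c : ∀ q ∈ U, ContDiffAt ℝ (⊤ : ℕ∞) G1 q := fun q hq => (hGc q hq).fderiv_right (by simp)
  have hP1d : ∀ q ∈ U, DifferentiableAt ℝ P1 q := fun q hq => (hP1c q hq).differentiableAt (by simp)
  have hG1d : ∀ q ∈ U, DifferentiableAt ℝ G1 q := fun q hq => (hG1c q hq).differentiableAt (by simp)
  -- slice derivative conversions
  have hsPx : ∀ (x y : E), y ≠ 0 → ∀ v, fderiv ℝ (fun x' => P x' y) x v = P1 (x, y) (v, 0) :=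
    fun x y hy v => fderiv_fst_slice (hPd _ (hmem x y hy)) v
  have hsPy : ∀ (x y : E), y ≠ 0 → ∀ v, fderiv ℝ (P x) y v = P1 (x, y) (0, v) :=
    fun x y hy v => fderiv_snd_slice (hPd _ (hmem x y hy)) v
  have hsGx : ∀ (x y : E), y ≠ 0 → ∀ v, fderiv ℝ (fun x' => G x' y) x v = G1 (x, y) (v, 0) :=
    fun x y hy v => fderiv_fst_slice (hGd _ (hmem x y hy)) v
  have hsGy : ∀ (x y : E), y ≠ 0 → ∀ v, fderiv ℝ (G x) y v = G1 (x, y) (0, v) :=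
    fun x y hy v => fderiv_snd_slice (hGd _ (hmem x y hy)) v
  -- evaluation maps have derivatives
  have hflipP : ∀ q ∈ U, ∀ c : E × E,
      HasFDerivAt (fun p => P1 p c) ((P2 q).flip c) q := by
    intro q hq c
    have h := (hP1d q hq).hasFDerivAt.clm_apply (hasFDerivAt_const c q)
    simpa using h
  have hflipG : ∀ q ∈ U, ∀ c : E × E,
      HasFDerivAt (fun p => G1 p c) ((G2 q).flip c) q := by
    intro q hq c
    have h := (hG1d q hq).hasFDerivAt.clm_apply (hasFDerivAt_const c q)
    simpa using h
  -- Euler identities (base)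
  have hEulP : ∀ (x y : E), y ≠ 0 → P1 (x, y) (0, y) = Pf (x, y) := by
    intro x y hy
    have hPxd : DifferentiableAt ℝ (P x) y :=
      DifferentiableAt.comp (𝕜 := ℝ) (g := Pf) (f := fun y' : E => (x, y')) y
        (hPd _ (hmem x y hy)) ((differentiableAt_const x).prodMk differentiableAt_id)
    have h := euler_scalar hPxd (fun l hl => hPhom x y hy l hl)
    rw [hsPy x y hy y] at h
    exact h
  have hEulG : ∀ (x y : E), y ≠ 0 → G1 (x, y) (0, y) = (2 : ℝ) • Gf (x, y) := by
    intro x y hy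
    have hGxd : DifferentiableAt ℝ (G x) y :=
      DifferentiableAt.comp (𝕜 := ℝ) (g := Gf) (f := fun y' : E => (x, y')) y
        (hGd _ (hmem x y hy)) ((differentiableAt_const x).prodMk differentiableAt_id)
    have h := euler_vec2 hGxd (fun l hl => hG2 x y hy l hl)
    rw [hsGy x y hy y] at h
    exact h
  -- full-form Funk equation
  have h1 : ∀ q ∈ U, ∀ v : E,
      P1 q (v, 0) - P1 q (0, G1 q (0, v)) = Pf q * P1 q (0, v) := by
    rintro ⟨x, y⟩ hq v
    have hy : y ≠ 0 := hq
    have h := hFunk x y hy v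
    rw [hsPx x y hy v, hsGy x y hy v, hsPy x y hy _, hsPy x y hy v] at h
    exact h
  -- differentiated Funk equation
  have h1' : ∀ (v : E), ∀ q ∈ U, ∀ w : E × E,
      P2 q w (v, 0) - P1 q (0, G2 q w (0, v)) - P2 q w (0, G1 q (0, v))
        = P1 q w * P1 q (0, v) + Pf q * P2 q w (0, v) := by
    intro v q hq w
    have hA : HasFDerivAt (fun p => P1 p ((v, 0) : E × E)) ((P2 q).flip (v, 0)) q :=
      hflipP q hq _
    have hGv : HasFDerivAt (fun p => G1 p (((0 : E), v) : E × E)) ((G2 q).flip (0, v)) q :=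
      hflipG q hq _
    have hu : HasFDerivAt (fun p => (((0 : E), G1 p (0, v)) : E × E))
        ((0 : (E × E) →L[ℝ] E).prod ((G2 q).flip (0, v))) q :=
      (hasFDerivAt_const (0 : E) q).prodMk hGv
    have hB : HasFDerivAt (fun p => P1 p (0, G1 p (0, v)))
        ((P1 q).comp ((0 : (E × E) →L[ℝ] E).prod ((G2 q).flip (0, v)))
          + (P2 q).flip (0, G1 q (0, v))) q :=
      (hP1d q hq).hasFDerivAt.clm_apply hu
    have hBv : HasFDerivAt (fun p => P1 p (((0 : E), v) : E × E)) ((P2 q).flip (0, v)) q :=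
      hflipP q hq _
    have hC : HasFDerivAt (fun p => Pf p * P1 p ((0 : E), v))
        (Pf q • (P2 q).flip (0, v) + P1 q (0, v) • P1 q) q :=
      (hPd q hq).hasFDerivAt.mul hBv
    have hTheta := (hA.sub hB).sub hC
    have hzero : (fun p => P1 p (v, 0) - P1 p (0, G1 p (0, v)) - Pf p * P1 p ((0:E), v))
        =ᶠ[nhds q] fun _ => (0 : ℝ) := by
      filter_upwards [hU.mem_nhds hq] with p hp
      have h := h1 p hp v
      linarith
    have hD0 := hTheta.fderiv
    erw [hzero.fderiv_eq, fderiv_fun_const] at hD0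
    have hw := congrArg (fun L : (E × E) →L[ℝ] ℝ => L w) hD0
    simp only [ContinuousLinearMap.coe_sub', Pi.sub_apply, ContinuousLinearMap.add_apply,
      ContinuousLinearMap.flip_apply, ContinuousLinearMap.comp_apply,
      ContinuousLinearMap.prod_apply, ContinuousLinearMap.zero_apply,
      ContinuousLinearMap.coe_smul', Pi.smul_apply, smul_eq_mul, Pi.zero_apply,
      ContinuousLinearMap.coe_zero] at hw
    linarith
  -- linearity helpers for the vertical 1-form  B = P1 q (0, ·)
  have hBsub : ∀ (q : E × E) (a b : E), P1 q (0, a - b) = P1 q (0, a) - P1 q (0, b) := by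
    intro q a b
    rw [show (((0 : E), a - b) : E × E) = (((0 : E), a) : E × E) - ((0 : E), b) by simp,
      map_sub]
  have hBadd : ∀ (q : E × E) (a b : E), P1 q (0, a + b) = P1 q (0, a) + P1 q (0, b) := by
    intro q a b
    rw [show (((0 : E), a + b) : E × E) = (((0 : E), a) : E × E) + ((0 : E), b) by simp,
      map_add]
  have hBsmul : ∀ (q : E × E) (c : ℝ) (a : E), P1 q (0, c • a) = c * P1 q (0, a) := by
    intro q c a
    rw [show (((0 : E), c • a) : E × E) = c • (((0 : E), a) : E × E) by simp, map_smul,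
      smul_eq_mul]
  -- differentiated Euler identities
  have hEulP' : ∀ (x y : E), y ≠ 0 → ∀ w : E × E,
      P2 (x, y) w (0, y) = P1 (x, y) w - P1 (x, y) (0, w.2) := by
    intro x y hy w
    have hq : ((x, y) : E × E) ∈ U := hmem x y hy
    have hL : HasFDerivAt (fun p : E × E => (((0 : E), p.2) : E × E))
        ((0 : (E × E) →L[ℝ] E).prod (ContinuousLinearMap.snd ℝ E E)) (x, y) :=
      ((0 : (E × E) →L[ℝ] E).prod (ContinuousLinearMap.snd ℝ E E)).hasFDerivAt
    have hB : HasFDerivAt (fun p : E × E => P1 p (0, p.2))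
        ((P1 (x, y)).comp ((0 : (E × E) →L[ℝ] E).prod (ContinuousLinearMap.snd ℝ E E))
          + (P2 (x, y)).flip (0, y)) (x, y) :=
      (hP1d _ hq).hasFDerivAt.clm_apply hL
    have hTheta := hB.sub (hPd _ hq).hasFDerivAt
    have hzero : (fun p : E × E => P1 p (0, p.2) - Pf p) =ᶠ[nhds ((x, y) : E × E)]
        fun _ => (0 : ℝ) := by
      filter_upwards [hU.mem_nhds hq] with p hp
      have h := hEulP p.1 p.2 hp
      simp only [Prod.mk.eta] at h
      linarith
    have hD0 := hTheta.fderiv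
    erw [hzero.fderiv_eq, fderiv_fun_const] at hD0
    have hw := congrArg (fun L : (E × E) →L[ℝ] ℝ => L w) hD0
    simp only [ContinuousLinearMap.coe_sub', Pi.sub_apply, ContinuousLinearMap.add_apply,
      ContinuousLinearMap.flip_apply, ContinuousLinearMap.comp_apply,
      ContinuousLinearMap.prod_apply, ContinuousLinearMap.zero_apply,
      ContinuousLinearMap.coe_snd', Pi.zero_apply, ContinuousLinearMap.coe_zero] at hw
    linarith
  have hEulG' : ∀ (x y : E), y ≠ 0 → ∀ w : E × E,
      G2 (x, y) w (0, y) = (2 : ℝ) • G1 (x, y) w - G1 (x, y) (0, w.2) := by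
    intro x y hy w
    have hq : ((x, y) : E × E) ∈ U := hmem x y hy
    have hL : HasFDerivAt (fun p : E × E => (((0 : E), p.2) : E × E))
        ((0 : (E × E) →L[ℝ] E).prod (ContinuousLinearMap.snd ℝ E E)) (x, y) :=
      ((0 : (E × E) →L[ℝ] E).prod (ContinuousLinearMap.snd ℝ E E)).hasFDerivAt
    have hB : HasFDerivAt (fun p : E × E => G1 p (0, p.2))
        ((G1 (x, y)).comp ((0 : (E × E) →L[ℝ] E).prod (ContinuousLinearMap.snd ℝ E E))
          + (G2 (x, y)).flip (0, y)) (x, y) :=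
      (hG1d _ hq).hasFDerivAt.clm_apply hL
    have hTheta := hB.sub ((hGd _ hq).hasFDerivAt.const_smul (2 : ℝ))
    have hzero : (fun p : E × E => G1 p (0, p.2) - (2 : ℝ) • Gf p) =ᶠ[nhds ((x, y) : E × E)]
        fun _ => (0 : E) := by
      filter_upwards [hU.mem_nhds hq] with p hp
      have h := hEulG p.1 p.2 hp
      simp only [Prod.mk.eta] at h
      rw [h, sub_self]
    have hD0 := hTheta.fderiv
    erw [hzero.fderiv_eq, fderiv_fun_const] at hD0
    have hw := congrArg (fun L : (E × E) →L[ℝ] E => L w) hD0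
    simp only [ContinuousLinearMap.coe_sub', Pi.sub_apply, ContinuousLinearMap.add_apply,
      ContinuousLinearMap.flip_apply, ContinuousLinearMap.comp_apply,
      ContinuousLinearMap.prod_apply, ContinuousLinearMap.zero_apply,
      ContinuousLinearMap.coe_snd', Pi.zero_apply, ContinuousLinearMap.coe_zero,
      ContinuousLinearMap.coe_smul', Pi.smul_apply] at hw
    have h' : G1 (x, y) (0, w.2) + G2 (x, y) w (0, y) = (2 : ℝ) • G1 (x, y) w :=
      sub_eq_zero.mp hw.symm
    rw [eq_sub_iff_add_eq, add_comm]
    exact h'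
  -- symmetry of the second derivative of P
  have hSymP : ∀ q ∈ U, ∀ a b : E × E, P2 q a b = P2 q b a := by
    intro q hq a b
    exact ((hPc q hq).isSymmSndFDerivAt (by rw [minSmoothness_of_isRCLikeNormedField]; exact WithTop.coe_le_coe.mpr le_top)).eq a b
  -- differentiability of the evaluated first derivative of G
  have hG1vd : ∀ q ∈ U, ∀ c : E × E, DifferentiableAt ℝ (fun p : E × E => G1 p c) q :=
    fun q hq c => (hG1d q hq).clm_apply (differentiableAt_const _)
  -- the Jacobi endomorphism identity in full form
  have hPhiVec : ∀ (x y : E), y ≠ 0 → ∀ v : E,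
      (2 : ℝ) • G1 (x, y) (v, 0) - G2 (x, y) ((y, 0) : E × E) (0, v)
        + G2 (x, y) ((0, (2 : ℝ) • Gf (x, y)) : E × E) (0, v)
        - G1 (x, y) (0, G1 (x, y) (0, v))
      = (κ x y * (F x y) ^ 2) • v - (κ x y * F x y * fderiv ℝ (F x) y v) • y := by
    intro x y hy v
    have hq : ((x, y) : E × E) ∈ U := hmem x y hy
    have e2 : fderiv ℝ (fun x' => fderiv ℝ (G x') y v) x y
        = G2 (x, y) ((y, 0) : E × E) (0, v) := by
      have hfun : (fun x' => fderiv ℝ (G x') y v) = fun x' => G1 (x', y) ((0 : E), v) :=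
        funext fun x' => hsGy x' y hy v
      rw [hfun]
      calc fderiv ℝ (fun x' => G1 (x', y) ((0 : E), v)) x y
          = fderiv ℝ (fun p : E × E => G1 p ((0 : E), v)) (x, y) (y, 0) :=
            fderiv_fst_slice (hG1vd _ hq _) y
        _ = G2 (x, y) ((y, 0) : E × E) (0, v) := by
            rw [(hflipG (x, y) hq ((0 : E), v)).fderiv]; rfl
    have e3 : fderiv ℝ (fun y' => fderiv ℝ (G x) y' v) y ((2 : ℝ) • G x y)
        = G2 (x, y) ((0, (2 : ℝ) • Gf (x, y)) : E × E) (0, v) := by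
      have hev : (fun y' => fderiv ℝ (G x) y' v) =ᶠ[nhds y]
          fun y' => G1 (x, y') ((0 : E), v) := by
        filter_upwards [isOpen_compl_singleton.mem_nhds (by simpa using hy :
          y ∈ ({0}ᶜ : Set E))] with y' hy'
        exact hsGy x y' hy' v
      rw [hev.fderiv_eq]
      calc fderiv ℝ (fun y' => G1 (x, y') ((0 : E), v)) y ((2 : ℝ) • G x y)
          = fderiv ℝ (fun p : E × E => G1 p ((0 : E), v)) (x, y) (0, (2 : ℝ) • G x y) :=
            fderiv_snd_slice (hG1vd _ hq _) _
        _ = G2 (x, y) ((0, (2 : ℝ) • Gf (x, y)) : E × E) (0, v) := by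
            rw [(hflipG (x, y) hq ((0 : E), v)).fderiv]; rfl
    have h := hPhiFlag x y hy v
    rw [hsGx x y hy v, e2, e3, hsGy x y hy v, hsGy x y hy (G1 (x, y) ((0 : E), v))] at h
    exact h
  -- final computation at a point
  intro x y hy v
  have hq : ((x, y) : E × E) ∈ U := hmem x y hy
  have hT := congrArg (fun z : E => P1 (x, y) ((0 : E), z)) (hPhiVec x y hy v)
  simp only [hBsub, hBadd, hBsmul] at hT
  rw [hEulP x y hy] at hT
  -- instances of the differentiated Funk equation
  have eqI := h1' v (x, y) hq ((y, 0) : E × E)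
  have eqII := h1' y (x, y) hq ((v, 0) : E × E)
  have eqIII := h1' y (x, y) hq ((0, G1 (x, y) ((0 : E), v)) : E × E)
  have eqIV := h1' v (x, y) hq ((0, (2 : ℝ) • Gf (x, y)) : E × E)
  have eqV := h1' y (x, y) hq ((0, v) : E × E)
  have h1v := h1 (x, y) hq v
  have h1y := h1 (x, y) hq y
  -- rewrite Euler identities inside the instances
  rw [hEulG' x y hy ((v, 0) : E × E), hEulG x y hy, hEulP' x y hy ((v, 0) : E × E)] at eqII
  rw [hEulG' x y hy ((0, G1 (x, y) ((0 : E), v)) : E × E), hEulG x y hy,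
    hEulP' x y hy ((0, G1 (x, y) ((0 : E), v)) : E × E)] at eqIII
  rw [hEulG' x y hy ((0, v) : E × E), hEulG x y hy,
    hEulP' x y hy ((0, v) : E × E)] at eqV
  rw [hEulG x y hy] at h1y
  simp only [hBsub, hBadd, hBsmul] at eqII eqIII eqV
  rw [hEulP x y hy] at eqII
  rw [hEulP x y hy] at eqIII
  rw [hEulP x y hy] at eqV
  rw [hEulP x y hy] at h1y
  simp only [Prod.mk_zero_zero, map_zero] at eqII
  -- symmetrize second derivatives of P
  rw [hSymP _ hq ((v, 0) : E × E) ((y, 0) : E × E)] at eqII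
  rw [hSymP _ hq ((0, G1 (x, y) ((0 : E), v)) : E × E) ((y, 0) : E × E)] at eqIII
  rw [hSymP _ hq ((0, G1 (x, y) ((0 : E), v)) : E × E)
    ((0, (2 : ℝ) • Gf (x, y)) : E × E)] at eqIII
  rw [hSymP _ hq ((0, v) : E × E) ((y, 0) : E × E)] at eqV
  rw [hSymP _ hq ((0, v) : E × E) ((0, (2 : ℝ) • Gf (x, y)) : E × E)] at eqV
  rw [hSymP _ hq ((0, (2 : ℝ) • Gf (x, y)) : E × E) ((v, 0) : E × E)] at eqIV
  -- assemble
  have hscal : κ x y * F x y ^ 2 * P1 (x, y) ((0 : E), v)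
      - κ x y * F x y * fderiv ℝ (F x) y v * Pf (x, y) = 0 := by
    linear_combination (-1 : ℝ) * hT + eqI - eqII + eqIII - eqIV
      + Pf (x, y) * eqV - 2 * Pf (x, y) * h1v + P1 (x, y) ((0 : E), v) * h1y
  have hfactor : κ x y * F x y *
      (F x y * P1 (x, y) ((0 : E), v) - P x y * fderiv ℝ (F x) y v) = 0 := by
    have hp : Pf (x, y) = P x y := rfl
    rw [hp] at hscal
    ring_nf
    ring_nf at hscal
    linarith
  have hκF : κ x y * F x y ≠ 0 := mul_ne_zero (hκ x y hy) (ne_of_gt (hFpos x y hy))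
  have hinner : F x y * P1 (x, y) ((0 : E), v) - P x y * fderiv ℝ (F x) y v = 0 := by
    rcases mul_eq_zero.mp hfactor with h | h
    · exact absurd h hκF
    · exact h
  rw [hsPy x y hy v]
  linarith

end Key




section Aux2

variable {E F G : Type*} [NormedAddCommGroup E] [NormedSpace ℝ E]
  [NormedAddCommGroup F] [NormedSpace ℝ F] [NormedAddCommGroup G] [NormedSpace ℝ G]

lemma euler_scalar' {f : E → ℝ} {y : E} (hf : DifferentiableAt ℝ f y)
    (h : ∀ l : ℝ, 0 < l → f (l • y) = l * f y) : fderiv ℝ f y y = f y := by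
  have hs : HasDerivAt (fun l : ℝ => l • y) y 1 := by
    simpa using (hasDerivAt_id (1 : ℝ)).smul_const y
  have h1 : HasDerivAt (fun l : ℝ => f (l • y)) (fderiv ℝ f y y) 1 := by
    have hfy : HasFDerivAt f (fderiv ℝ f y) ((1:ℝ) • y) := by
      rw [one_smul]; exact hf.hasFDerivAt
    exact hfy.comp_hasDerivAt 1 hs
  have h2 : HasDerivAt (fun l : ℝ => l * f y) (f y) 1 := by
    simpa using (hasDerivAt_id (1 : ℝ)).mul_const (f y)
  have heq : (fun l : ℝ => f (l • y)) =ᶠ[nhds (1 : ℝ)] fun l => l * f y := by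
    filter_upwards [eventually_gt_nhds zero_lt_one] with l hl using h l hl
  exact (h1.congr_of_eventuallyEq heq.symm).unique h2

lemma const_on_segment' {f : E → ℝ} {a b : E}
    (hf : ∀ z ∈ segment ℝ a b, HasFDerivAt f (0 : E →L[ℝ] ℝ) z) : f a = f b := by
  have h := Convex.norm_image_sub_le_of_norm_hasFDerivWithin_le
    (f := f) (f' := fun _ => (0 : E →L[ℝ] ℝ)) (C := 0)
    (fun z hz => (hf z hz).hasFDerivWithinAt) (fun z _ => by simp)
    (convex_segment a b) (left_mem_segment ℝ a b) (right_mem_segment ℝ a b)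
  have h0 : ‖f b - f a‖ ≤ 0 := by simpa using h
  have : f b - f a = 0 := by
    have := le_antisymm h0 (norm_nonneg _); simpa [norm_eq_zero] using this
  linarith [sub_eq_zero.mp this]

lemma segment_avoids_zero' {a b : E} (hb : b ≠ 0)
    (hspan : a ∉ Submodule.span ℝ {b}) : ∀ z ∈ segment ℝ a b, z ≠ 0 := by
  rintro z hz rfl
  rw [segment_eq_image] at hz
  obtain ⟨t, ht, h0⟩ := hz
  simp only at h0
  rcases eq_or_ne t 1 with rfl | ht1
  · simp only [sub_self, zero_smul, one_smul, zero_add] at h0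
    exact hb h0
  · apply hspan
    have h1t : (1 - t) ≠ 0 := sub_ne_zero.mpr (Ne.symm ht1)
    have hab : (1 - t) • a = -t • b := by
      rw [add_eq_zero_iff_eq_neg] at h0
      rw [h0, neg_smul]
    have : a = ((1 - t)⁻¹ * (-t)) • b := by
      rw [mul_smul, ← hab, inv_smul_smul₀ h1t]
    rw [this]
    exact Submodule.smul_mem _ _ (Submodule.mem_span_singleton_self b)

lemma exists_not_mem_span' {n : ℕ} (hn : 2 ≤ n) (b : EuclideanSpace ℝ (Fin n)) :
    ∃ z : EuclideanSpace ℝ (Fin n), z ∉ Submodule.span ℝ {b} := by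
  by_contra h
  push_neg at h
  have htop : Submodule.span ℝ {b} = ⊤ := Submodule.eq_top_iff'.mpr h
  have h1 : Module.finrank ℝ (EuclideanSpace ℝ (Fin n)) ≤ 1 := by
    rw [← finrank_top ℝ (EuclideanSpace ℝ (Fin n)), ← htop]
    have := finrank_span_le_card (R := ℝ) (M := EuclideanSpace ℝ (Fin n)) {b}
    simpa using this
  rw [finrank_euclideanSpace_fin] at h1
  omega

lemma const_of_hasFDerivAt_zero' {n : ℕ} (hn : 2 ≤ n)
    {f : EuclideanSpace ℝ (Fin n) → ℝ}
    (hf : ∀ y : EuclideanSpace ℝ (Fin n), y ≠ 0 → HasFDerivAt f (0 : _ →L[ℝ] ℝ) y)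
    {y₁ y₂ : EuclideanSpace ℝ (Fin n)} (h1 : y₁ ≠ 0) (h2 : y₂ ≠ 0) : f y₁ = f y₂ := by
  have seg : ∀ a b : EuclideanSpace ℝ (Fin n), b ≠ 0 →
      a ∉ Submodule.span ℝ {b} → f a = f b := by
    intro a b hb hspan
    exact const_on_segment' (fun z hz => hf z (segment_avoids_zero' hb hspan z hz))
  by_cases hmem : y₁ ∈ Submodule.span ℝ {y₂}
  · obtain ⟨z, hz⟩ := exists_not_mem_span' hn y₂
    have hz2 : z ∉ Submodule.span ℝ {y₁} := by
      intro hzz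
      exact hz (Submodule.span_le.mpr (by simpa using hmem) hzz)
    calc f y₁ = f z := (seg z y₁ h1 hz2).symm ▸ (seg z y₁ h1 hz2).symm
    _ = f y₂ := seg z y₂ h2 hz
  · exact seg y₁ y₂ h2 hmem

end Aux2

section KeyP0

variable {n : ℕ}

local notation "E'" => EuclideanSpace ℝ (Fin n)

lemma key_P0 (hn : 2 ≤ n)
    (G : EuclideanSpace ℝ (Fin n) → EuclideanSpace ℝ (Fin n) → EuclideanSpace ℝ (Fin n))
    (P F : EuclideanSpace ℝ (Fin n) → EuclideanSpace ℝ (Fin n) → ℝ)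
    (hFsm : ContDiffOn ℝ (⊤ : ℕ∞)
      (fun p : EuclideanSpace ℝ (Fin n) × EuclideanSpace ℝ (Fin n) => F p.1 p.2)
      {p | p.2 ≠ 0})
    (hPsm : ContDiffOn ℝ (⊤ : ℕ∞)
      (fun p : EuclideanSpace ℝ (Fin n) × EuclideanSpace ℝ (Fin n) => P p.1 p.2)
      {p | p.2 ≠ 0})
    (hFpos : ∀ x y, y ≠ 0 → 0 < F x y)
    (hFhom : ∀ x y, y ≠ 0 → ∀ l : ℝ, 0 < l → F x (l • y) = l * F x y)
    (hFnonlin : ∀ x, ¬ ∃ g : EuclideanSpace ℝ (Fin n), ∀ y, y ≠ 0 → F x y = ⟪g, y⟫)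
    (hT1 : ∀ x y, y ≠ 0 → ∀ v,
      F x y * fderiv ℝ (P x) y v = P x y * fderiv ℝ (F x) y v)
    (hFunk : ∀ x y, y ≠ 0 → ∀ v,
      fderiv ℝ (fun x' => P x' y) x v - fderiv ℝ (P x) y (fderiv ℝ (G x) y v) =
        P x y * fderiv ℝ (P x) y v)
    (hMetr : ∀ x y, y ≠ 0 → ∀ v,
      fderiv ℝ (fun x' => F x' y) x v -
        fderiv ℝ (F x) y
          (fderiv ℝ (G x) y v - P x y • v - (fderiv ℝ (P x) y v) • y) = 0) :
    ∀ x y, y ≠ 0 → P x y = 0 := by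
  set U : Set (E' × E') := {p | p.2 ≠ 0} with hUdef
  have hU : IsOpen U := isOpen_compl_singleton.preimage continuous_snd
  set Pf : E' × E' → ℝ := fun p => P p.1 p.2 with hPfdef
  set Ff : E' × E' → ℝ := fun p => F p.1 p.2 with hFfdef
  have hmem : ∀ (x y : E'), y ≠ 0 → ((x, y) : E' × E') ∈ U := fun x y hy => hy
  have hPd : ∀ q ∈ U, DifferentiableAt ℝ Pf q := fun q hq =>
    (hPsm.contDiffAt (hU.mem_nhds hq)).differentiableAt (by simp)
  have hFd : ∀ q ∈ U, DifferentiableAt ℝ Ff q := fun q hq =>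
    (hFsm.contDiffAt (hU.mem_nhds hq)).differentiableAt (by simp)
  -- slice differentiability
  have hPyd : ∀ (x y : E'), y ≠ 0 → DifferentiableAt ℝ (P x) y := fun x y hy =>
    DifferentiableAt.comp (𝕜 := ℝ) (g := Pf) (f := fun y' : E' => (x, y')) y
      (hPd _ (hmem x y hy)) ((differentiableAt_const x).prodMk differentiableAt_id)
  have hFyd : ∀ (x y : E'), y ≠ 0 → DifferentiableAt ℝ (F x) y := fun x y hy =>
    DifferentiableAt.comp (𝕜 := ℝ) (g := Ff) (f := fun y' : E' => (x, y')) y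
      (hFd _ (hmem x y hy)) ((differentiableAt_const x).prodMk differentiableAt_id)
  have hPxd : ∀ (x y : E'), y ≠ 0 → DifferentiableAt ℝ (fun x' => P x' y) x := fun x y hy =>
    DifferentiableAt.comp (𝕜 := ℝ) (g := Pf) (f := fun x' : E' => (x', y)) x
      (hPd _ (hmem x y hy)) (differentiableAt_id.prodMk (differentiableAt_const y))
  have hFxd : ∀ (x y : E'), y ≠ 0 → DifferentiableAt ℝ (fun x' => F x' y) x := fun x y hy =>
    DifferentiableAt.comp (𝕜 := ℝ) (g := Ff) (f := fun x' : E' => (x', y)) x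
      (hFd _ (hmem x y hy)) (differentiableAt_id.prodMk (differentiableAt_const y))
  -- Euler identity for F
  have hEulF : ∀ (x y : E'), y ≠ 0 → fderiv ℝ (F x) y y = F x y := fun x y hy =>
    euler_scalar' (hFyd x y hy) (fun l hl => hFhom x y hy l hl)
  -- the ratio P/F is fiberwise constant
  have hratio : ∀ (x y : E'), y ≠ 0 →
      HasFDerivAt (fun y' => P x y' * (F x y')⁻¹) (0 : E' →L[ℝ] ℝ) y := by
    intro x y hy
    have hFne : F x y ≠ 0 := ne_of_gt (hFpos x y hy)
    have hinv : HasFDerivAt (fun y' => (F x y')⁻¹)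
        ((-ContinuousLinearMap.mulLeftRight ℝ ℝ (F x y)⁻¹ (F x y)⁻¹).comp
          (fderiv ℝ (F x) y)) y :=
      (hasFDerivAt_inv' (𝕜 := ℝ) hFne).comp y (hFyd x y hy).hasFDerivAt
    have h := (hPyd x y hy).hasFDerivAt.mul hinv
    refine h.congr_fderiv ?_
    ext v
    simp only [ContinuousLinearMap.zero_apply, ContinuousLinearMap.add_apply,
      ContinuousLinearMap.coe_smul', Pi.smul_apply, ContinuousLinearMap.comp_apply,
      ContinuousLinearMap.neg_apply, ContinuousLinearMap.mulLeftRight_apply, smul_eq_mul]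
    have h1 := hT1 x y hy v
    field_simp
    linear_combination h1
  -- a fixed nonzero vector
  have h0 : 0 < n := by omega
  set y₀ : E' := EuclideanSpace.single ⟨0, h0⟩ 1 with hy₀def
  have hy₀ : y₀ ≠ 0 := by
    intro h
    have := congrFun (congrArg (fun f : E' => (f : Fin n → ℝ)) h) ⟨0, h0⟩
    simp [hy₀def, EuclideanSpace.single_apply] at this
  set lam : E' → ℝ := fun x => P x y₀ * (F x y₀)⁻¹ with hlamdef
  have hPF : ∀ (x y : E'), y ≠ 0 → P x y = lam x * F x y := by
    intro x y hy
    have hconst : P x y * (F x y)⁻¹ = lam x :=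
      const_of_hasFDerivAt_zero' hn (hratio x) hy hy₀
    have hFne : F x y ≠ 0 := ne_of_gt (hFpos x y hy)
    field_simp at hconst
    exact hconst.trans (mul_comm _ _)
  -- differentiability of lam
  have hlamd : ∀ x : E', DifferentiableAt ℝ lam x := by
    intro x
    exact (hPxd x y₀ hy₀).mul ((hFxd x y₀ hy₀).inv (ne_of_gt (hFpos x y₀ hy₀)))
  -- the key ODE for lam
  have hlam' : ∀ (x y : E'), y ≠ 0 → ∀ v,
      fderiv ℝ lam x v = 3 * (lam x) ^ 2 * fderiv ℝ (F x) y v := by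
    intro x y hy v
    have hFne : F x y ≠ 0 := ne_of_gt (hFpos x y hy)
    -- fderiv of x-slice of P via lam * F
    have hAfun : (fun x' => P x' y) = fun x' => lam x' * F x' y :=
      funext fun x' => hPF x' y hy
    have hA : fderiv ℝ (fun x' => P x' y) x
        = lam x • fderiv ℝ (fun x' => F x' y) x + F x y • fderiv ℝ lam x := by
      rw [hAfun]
      exact ((hlamd x).hasFDerivAt.mul (hFxd x y hy).hasFDerivAt).fderiv
    have hBev : (P x) =ᶠ[nhds y] fun y' => lam x * F x y' := by
      filter_upwards [isOpen_compl_singleton.mem_nhds (by simpa using hy :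
        y ∈ ({0}ᶜ : Set E'))] with y' hy'
      exact hPF x y' hy'
    have hB : fderiv ℝ (P x) y = lam x • fderiv ℝ (F x) y := by
      rw [hBev.fderiv_eq]
      exact fderiv_const_mul (hFyd x y hy) (lam x)
    have hfunk := hFunk x y hy v
    have hmetr := hMetr x y hy v
    rw [hA, hB] at hfunk
    rw [hB] at hmetr
    simp only [ContinuousLinearMap.add_apply, ContinuousLinearMap.coe_smul', Pi.smul_apply,
      smul_eq_mul, map_sub, map_smul] at hfunk hmetr
    rw [hEulF x y hy] at hmetr
    rw [hPF x y hy] at hfunk hmetr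
    -- hfunk : lam*Fx'(v) + F*lam'(v) - lam*C(Nv) = (lam F)*(lam*Cv)
    -- hmetr : Fx'(v) - (C(Nv) - lamF*Cv - lam*Cv*F) = 0
    have hkey : F x y * (fderiv ℝ lam x v - 3 * (lam x) ^ 2 * fderiv ℝ (F x) y v) = 0 := by
      linear_combination hfunk - lam x * hmetr
    rcases mul_eq_zero.mp hkey with h | h
    · exact absurd h hFne
    · linarith
  -- lam vanishes everywhere
  have hlam0 : ∀ x : E', lam x = 0 := by
    intro x
    by_contra hlx
    apply hFnonlin x
    refine ⟨(InnerProductSpace.toDual ℝ E').symm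
      ((3 * (lam x) ^ 2)⁻¹ • fderiv ℝ lam x), fun y hy => ?_⟩
    rw [InnerProductSpace.toDual_symm_apply]
    have h3 : (3 : ℝ) * (lam x) ^ 2 ≠ 0 := by positivity
    have hC := hlam' x y hy y
    have hEu := hEulF x y hy
    simp only [ContinuousLinearMap.coe_smul', Pi.smul_apply, smul_eq_mul]
    field_simp
    linear_combination -hC - 3 * lam x ^ 2 * hEu
  intro x y hy
  rw [hPF x y hy, hlam0 x, zero_mul]

end KeyP0

/-- corollary, coordinate model: Let `S` be the spray with coefficients `G`
(positively 2-homogeneous in `y`) on `ℝ^n × (ℝ^n \ {0})`, `n ≥ 2`, with nonlinear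
connection `N = ∂G/∂y`. Suppose `P` (1-homogeneous in `y`) is a Funk function for `S`
(`d_hP = P d_JP`), the Jacobi endomorphism of `S` (written through Shen's coordinate
formula `Φ(v) = 2∂_xG(v) − ∂_x(Nv)(y) + ∂_y(Nv)(2G) − N(Nv)`) is isotropic of
scalar-flag-curvature form `Φ(v) = κF² v − κF d_yF(v) y` with `κ` nowhere zero and `F`
positive — so the Ricci scalar `ρ = κF²` is nowhere zero — where `F` (a Finsler function:
smooth, positive, 1-homogeneous and nonlinear in `y`) metrizes the deformed spray
`S̃ = S − 2P𝔠`, i.e. `d_{h̃}F = 0` with `h̃`-connection `Ñ(v) = N(v) − P v − d_yP(v) y`.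
Then `−P` is a Funk function for `(M, F)` (w.r.t. `h̃`), and `P ≡ 0`. -/
theorem no_funk_deformation_to_metrizable (n : ℕ) (hn : 2 ≤ n)
    (G : EuclideanSpace ℝ (Fin n) → EuclideanSpace ℝ (Fin n) → EuclideanSpace ℝ (Fin n))
    (F P κ : EuclideanSpace ℝ (Fin n) → EuclideanSpace ℝ (Fin n) → ℝ)
    (hGsm : ContDiffOn ℝ (⊤ : ℕ∞)
      (fun p : EuclideanSpace ℝ (Fin n) × EuclideanSpace ℝ (Fin n) => G p.1 p.2)
      {p | p.2 ≠ 0})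
    (hFsm : ContDiffOn ℝ (⊤ : ℕ∞)
      (fun p : EuclideanSpace ℝ (Fin n) × EuclideanSpace ℝ (Fin n) => F p.1 p.2)
      {p | p.2 ≠ 0})
    (hPsm : ContDiffOn ℝ (⊤ : ℕ∞)
      (fun p : EuclideanSpace ℝ (Fin n) × EuclideanSpace ℝ (Fin n) => P p.1 p.2)
      {p | p.2 ≠ 0})
    (hG2 : ∀ x y, y ≠ 0 → ∀ l : ℝ, 0 < l → G x (l • y) = (l ^ 2) • G x y)
    (hFpos : ∀ x y, y ≠ 0 → 0 < F x y)
    (hFhom : ∀ x y, y ≠ 0 → ∀ l : ℝ, 0 < l → F x (l • y) = l * F x y)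
    (hPhom : ∀ x y, y ≠ 0 → ∀ l : ℝ, 0 < l → P x (l • y) = l * P x y)
    (hFnonlin : ∀ x, ¬ ∃ g : EuclideanSpace ℝ (Fin n), ∀ y, y ≠ 0 → F x y = ⟪g, y⟫)
    (hκ : ∀ x y, y ≠ 0 → κ x y ≠ 0)
    -- `P` is a Funk function for the spray `S`:
    (hFunk : ∀ x y, y ≠ 0 → ∀ v,
      fderiv ℝ (fun x' => P x' y) x v - fderiv ℝ (P x) y (fderiv ℝ (G x) y v) =
        P x y * fderiv ℝ (P x) y v)
    -- Jacobi endomorphism of `S` is isotropic, of scalar flag curvature form with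
    -- Ricci scalar `ρ = κ F²` nowhere vanishing:
    (hPhiFlag : ∀ x y, y ≠ 0 → ∀ v,
      (2 : ℝ) • fderiv ℝ (fun x' => G x' y) x v
        - fderiv ℝ (fun x' => fderiv ℝ (G x') y v) x y
        + fderiv ℝ (fun y' => fderiv ℝ (G x) y' v) y ((2 : ℝ) • G x y)
        - fderiv ℝ (G x) y (fderiv ℝ (G x) y v)
      = (κ x y * (F x y) ^ 2) • v - (κ x y * F x y * fderiv ℝ (F x) y v) • y)
    -- `F` metrizes the deformed spray `S̃ = S − 2P𝔠`, i.e. `d_{h̃} F = 0`: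
    (hMetr : ∀ x y, y ≠ 0 → ∀ v,
      fderiv ℝ (fun x' => F x' y) x v -
        fderiv ℝ (F x) y
          (fderiv ℝ (G x) y v - P x y • v - (fderiv ℝ (P x) y v) • y) = 0) :
    (∀ x y, y ≠ 0 → ∀ v,
      fderiv ℝ (fun x' => -P x' y) x v -
        fderiv ℝ (fun y' => -P x y') y
          (fderiv ℝ (G x) y v - P x y • v - (fderiv ℝ (P x) y v) • y) =
        (-P x y) * fderiv ℝ (fun y' => -P x y') y v)
    ∧ (∀ x y, y ≠ 0 → P x y = 0) := by
  have hT1 := key_T1 G P F κ hGsm hPsm hG2 hPhom hFpos hκ hFunk hPhiFlag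
  have hP0 := key_P0 hn G P F hFsm hPsm hFpos hFhom hFnonlin hT1 hFunk hMetr
  refine ⟨?_, hP0⟩
  intro x y hy v
  have h1 : (fun x' => -P x' y) = fun _ : EuclideanSpace ℝ (Fin n) => (0 : ℝ) :=
    funext fun x' => by rw [hP0 x' y hy, neg_zero]
  have h2 : fderiv ℝ (fun y' => -P x y') y = 0 := by
    have hev : (fun y' => -P x y') =ᶠ[nhds y] fun _ => (0 : ℝ) := by
      filter_upwards [isOpen_compl_singleton.mem_nhds
        (by simpa using hy : y ∈ ({0}ᶜ : Set (EuclideanSpace ℝ (Fin n))))] with y' hy'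
      rw [hP0 x y' hy', neg_zero]
    rw [hev.fderiv_eq, fderiv_fun_const]
    rfl
  rw [h1, h2]
  simp
end
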